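/- arXiv:2410.14460 — 3 statements merged into one kernel-verified Lean document; each statement's English description precedes it below -/
import Mathlib

section
/- Let K : F → G and L : G → H be relational connectors between Set functors, and let r = s · t be the couniversal factorization of a relation r : X ⇸ Z. Then (L · K)r = Ls · Kt. -/
open CategoryTheory

universe u

/-- A `Set` functor: a functor from the category of sets (types) to itself. -/
abbrev SetFunctor : Type (u + 1) := CategoryTheory.Functor (Type u) (Type u)

/-- Applicative-order composition of relations: `(rcomp s r) x z ↔ ∃ y, r x y ∧ s y z`,
i.e. `s · r` in the notation of the paper. -/
def rcomp {X Y Z : Type u} (s : Y → Z → Prop) (r : X → Y → Prop) : X → Z → Prop :=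
  fun x z => ∃ y, r x y ∧ s y z

/-- Relational converse `r°`. -/
def rconv {X Y : Type u} (r : X → Y → Prop) : Y → X → Prop := fun y x => r x y

/-- The graph of a function, identifying functions with relations. -/
def graph {X Y : Type u} (f : X → Y) : X → Y → Prop := fun x y => f x = y

/-- The diagonal relation `Δ_X`. -/
def diag (X : Type u) : X → X → Prop := fun x y => x = y

/-- Relational image `r[A]`. -/
def rimage {X Y : Type u} (r : X → Y → Prop) (A : Set X) : Set Y :=
  {y | ∃ x ∈ A, r x y}

/-- The pointwise product of two `Set` functors. -/
def prodFunctor (F₁ F₂ : SetFunctor.{u}) : SetFunctor.{u} where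
  obj X := F₁.obj X × F₂.obj X
  map f := TypeCat.ofHom fun p => (F₁.map f p.1, F₂.map f p.2)
  map_id X := by ext p <;> simp
  map_comp f g := by ext p <;> simp

/-- An assignment of relations `F X ⇸ G Y` to relations `X ⇸ Y`; a relational connector
is such an assignment satisfying monotonicity and naturality (`RelConn.IsConnector`). -/
structure RelConn (F G : SetFunctor.{u}) : Type (u + 1) where
  rel : ∀ {X Y : Type u}, (X → Y → Prop) → F.obj X → G.obj Y → Prop

namespace RelConn

variable {F G H V : SetFunctor.{u}}

/-- Monotonicity: `r₁ ⊆ r₂` implies `L r₁ ⊆ L r₂`. -/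
def Mono (L : RelConn F G) : Prop :=
  ∀ (X Y : Type u) (r₁ r₂ : X → Y → Prop), (∀ x y, r₁ x y → r₂ x y) →
    ∀ a b, L.rel r₁ a b → L.rel r₂ a b

/-- Naturality: `L(g° · r · f) = (G g)° · L r · F f`. -/
def Natural (L : RelConn F G) : Prop :=
  ∀ (X X' Y Y' : Type u) (f : X' → X) (g : Y' → Y) (r : X → Y → Prop),
    L.rel (rcomp (rconv (graph g)) (rcomp r (graph f))) =
      rcomp (rconv (graph (G.map (TypeCat.ofHom g)))) (rcomp (L.rel r) (graph (F.map (TypeCat.ofHom f))))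

/-- A relational connector: a monotone and natural assignment of relations. -/
def IsConnector (L : RelConn F G) : Prop := L.Mono ∧ L.Natural

/-- The pointwise order on connectors: `L ≤ K` iff `L r ⊆ K r` for all `r`. -/
def le (L K : RelConn F G) : Prop :=
  ∀ (X Y : Type u) (r : X → Y → Prop) (a : F.obj X) (b : G.obj Y), L.rel r a b → K.rel r a b

/-- The composite `L · K` of relational connectors:
`(L · K) r = ⋃ { L s · K t | s · t = r }`, the join over all factorizations of `r`
through an arbitrary intermediate set `Y`. -/
def comp (L : RelConn G H) (K : RelConn F G) : RelConn F H where
  rel := fun {X Z} r a c => ∃ (Y : Type u) (t : X → Y → Prop) (s : Y → Z → Prop),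
    rcomp s t = r ∧ ∃ b, K.rel t a b ∧ L.rel s b c

/-- The converse `L°` of a connector: `L° r = (L (r°))°`. -/
def conv (L : RelConn F G) : RelConn G F where
  rel := fun {X Y} r b a => L.rel (rconv r) a b

/-- The meet (pointwise intersection) of two connectors. -/
def meet (L K : RelConn F G) : RelConn F G where
  rel := fun {X Y} r a b => L.rel r a b ∧ K.rel r a b

/-- The product `L₁ × L₂` of connectors. -/
def prod {F₁ F₂ G₁ G₂ : SetFunctor.{u}} (L₁ : RelConn F₁ G₁) (L₂ : RelConn F₂ G₂) :
    RelConn (prodFunctor F₁ F₂) (prodFunctor G₁ G₂) where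
  rel := fun {X Y} r p q => L₁.rel r p.1 q.1 ∧ L₂.rel r p.2 q.2

/-- The identity relational connector `id_F`: `b (id_F r) c` iff for all set functors `G`,
all relational connectors `L : G → F`, all `s : Z ⇸ X` and `a ∈ G Z`,
`a (L s) b` implies `a (L (r · s)) c`. -/
def id (F : SetFunctor.{u}) : RelConn F F where
  rel := fun {X Y} r b c =>
    ∀ (G : SetFunctor.{u}) (L : RelConn G F), L.IsConnector →
      ∀ (Z : Type u) (s : Z → X → Prop) (a : G.obj Z),
        L.rel s a b → L.rel (rcomp r s) a c

/-- A connector `L : F → F` is transitive if `L · L ≤ L`. -/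
def Transitive (L : RelConn F F) : Prop := (L.comp L).le L

/-- A connector `L : F → F` is symmetric if `L° ≤ L`. -/
def Symmetric (L : RelConn F F) : Prop := L.conv.le L

/-- A connector `L : F → F` extends `F` if `Δ_{F X} ⊆ L Δ_X` for all `X`. -/
def ExtendsF (L : RelConn F F) : Prop :=
  ∀ (X : Type u) (a b : F.obj X), diag (F.obj X) a b → L.rel (diag X) a b

/-- Condition (L2) of lax extensions: `L s · L r ⊆ L (s · r)`. -/
def LaxL2 (L : RelConn F F) : Prop :=
  ∀ (X Y Z : Type u) (r : X → Y → Prop) (s : Y → Z → Prop) (a : F.obj X) (c : F.obj Z),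
    rcomp (L.rel s) (L.rel r) a c → L.rel (rcomp s r) a c

/-- Condition (L3) of lax extensions: `F f ⊆ L f` and `(F f)° ⊆ L (f°)`. -/
def LaxL3 (L : RelConn F F) : Prop :=
  ∀ (X Y : Type u) (f : X → Y),
    (∀ a b, graph (F.map (TypeCat.ofHom f)) a b → L.rel (graph f) a b) ∧
    (∀ b a, rconv (graph (F.map (TypeCat.ofHom f))) b a → L.rel (rconv (graph f)) b a)

/-- A lax extension of `F`: an assignment of relations satisfying (L1) monotonicity,
(L2) and (L3). -/
def IsLaxExtension (L : RelConn F F) : Prop := L.Mono ∧ L.LaxL2 ∧ L.LaxL3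

/-- A connector `L : F → G` extends a natural transformation `α : F ⇒ G` if the graph of
`α_X` is contained in `L Δ_X` for all sets `X`. -/
def Extends (L : RelConn F G) (α : F ⟶ G) : Prop :=
  ∀ (X : Type u) (a : F.obj X) (b : G.obj X), graph (α.app X) a b → L.rel (diag X) a b

end RelConn

/-- The connector `id_G • α` obtained from a natural transformation `α : F ⇒ G`:
`(id_G • α) r = (id_G r) · α_X`. -/
def idBullet {F G : SetFunctor.{u}} (α : F ⟶ G) : RelConn F G where
  rel := fun {X Y} r => rcomp ((RelConn.id G).rel r) (graph (α.app X))

/-- The intermediate set of the couniversal factorization of `r : X ⇸ Z`: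
`{(A,B) ∈ P(X) × P(Z) | A × B ⊆ r}`. -/
def CoInt {X Z : Type u} (r : X → Z → Prop) : Type u :=
  {p : Set X × Set Z // ∀ x ∈ p.1, ∀ z ∈ p.2, r x z}

/-- The first leg `t = {(x,(A,B)) | x ∈ A}` of the couniversal factorization. -/
def coT {X Z : Type u} (r : X → Z → Prop) : X → CoInt r → Prop := fun x p => x ∈ p.1.1

/-- The second leg `s = {((A,B),z) | z ∈ B}` of the couniversal factorization. -/
def coS {X Z : Type u} (r : X → Z → Prop) : CoInt r → Z → Prop := fun p z => z ∈ p.1.2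

/-- `f : (C,γ) → (D,δ)` is a morphism of `F`-coalgebras: `F f ∘ γ = δ ∘ f`. -/
def IsCoalgMor {F : SetFunctor.{u}} {C D : Type u} (γ : C → F.obj C) (δ : D → F.obj D)
    (f : C → D) : Prop := ∀ x, F.map (TypeCat.ofHom f) (γ x) = δ (f x)

/-- `r : C ⇸ D` is an `L`-simulation between the `F`-coalgebra `(C,γ)` and the
`G`-coalgebra `(D,δ)`: `x r y` implies `γ x (L r) δ y`. -/
def IsSim {F G : SetFunctor.{u}} (L : RelConn F G) {C D : Type u}
    (γ : C → F.obj C) (δ : D → G.obj D) (r : C → D → Prop) : Prop :=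
  ∀ x y, r x y → L.rel r (γ x) (δ y)

/-- `L`-similarity: `x ≼_L y` iff some `L`-simulation relates `x` to `y`. -/
def SimilarL {F G : SetFunctor.{u}} (L : RelConn F G) {C D : Type u}
    (γ : C → F.obj C) (δ : D → G.obj D) : C → D → Prop :=
  fun x y => ∃ r, IsSim L γ δ r ∧ r x y

/-- `r : C ⇸ D` is an `L`-bisimulation (for `L : F → F`): both `r` and `r°`
are `L`-simulations. -/
def IsBisim {F : SetFunctor.{u}} (L : RelConn F F) {C D : Type u}
    (γ : C → F.obj C) (δ : D → F.obj D) (r : C → D → Prop) : Prop :=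
  IsSim L γ δ r ∧ IsSim L δ γ (rconv r)

/-- `L`-bisimilarity: `x ≃_L y` iff some `L`-bisimulation relates `x` to `y`. -/
def Bisimilar {F : SetFunctor.{u}} (L : RelConn F F) {C D : Type u}
    (γ : C → F.obj C) (δ : D → F.obj D) : C → D → Prop :=
  fun x y => ∃ r, IsBisim L γ δ r ∧ r x y

/-- Heterogeneous `L`-bisimulation for `L : F → G`: `r` is an `L`-simulation and `r°`
is an `L°`-simulation. -/
def IsBisimHet {F G : SetFunctor.{u}} (L : RelConn F G) {C D : Type u}
    (γ : C → F.obj C) (δ : D → G.obj D) (r : C → D → Prop) : Prop :=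
  IsSim L γ δ r ∧ IsSim L.conv δ γ (rconv r)

/-- Heterogeneous `L`-bisimilarity for `L : F → G`. -/
def BisimilarHet {F G : SetFunctor.{u}} (L : RelConn F G) {C D : Type u}
    (γ : C → F.obj C) (δ : D → G.obj D) : C → D → Prop :=
  fun x y => ∃ r, IsBisimHet L γ δ r ∧ r x y

/-- An `n`-ary predicate lifting for a `Set` functor `F`: a natural transformation
`(2^(-))ⁿ ⇒ 2^(F -)` with the contravariant powerset functor. -/
structure PredLifting (F : SetFunctor.{u}) (n : ℕ) : Type (u + 1) where
  app : ∀ (X : Type u), (Fin n → Set X) → Set (F.obj X)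
  natural : ∀ (X Y : Type u) (f : X → Y) (A : Fin n → Set Y) (a : F.obj X),
    F.map (TypeCat.ofHom f) a ∈ app Y A ↔ a ∈ app X (fun i => f ⁻¹' (A i))

/-- Monotonicity of a predicate lifting. -/
def PredLifting.IsMonotone {F : SetFunctor.{u}} {n : ℕ} (lam : PredLifting F n) : Prop :=
  ∀ (X : Type u) (A B : Fin n → Set X), (∀ i, A i ⊆ B i) → lam.app X A ⊆ lam.app X B

/-- The dual predicate lifting `λ̄_X(A₁,…,Aₙ) = F X \ λ_X(X\A₁,…,X\Aₙ)`. -/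
def PredLifting.dual {F : SetFunctor.{u}} {n : ℕ} (lam : PredLifting F n) :
    PredLifting F n where
  app X A := (lam.app X fun i => (A i)ᶜ)ᶜ
  natural := by
    intro X Y f A a
    simp only [Set.mem_compl_iff, lam.natural, Set.preimage_compl]

/-- The Kantorovich connector `L_Λ` induced by an arity-preserving relation `Λ` between
monotone predicate liftings of `F` and of `G`: `a (L_Λ r) b` iff for every `n`-ary pair
`(λ,μ) ∈ Λ` and all `A₁,…,Aₙ ⊆ X`, `a ∈ λ_X(A₁,…,Aₙ)` implies `b ∈ μ_Y(r[A₁],…,r[Aₙ])`. -/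
def kantorovich {F G : SetFunctor.{u}}
    (Λ : ∀ n : ℕ, PredLifting F n → PredLifting G n → Prop) : RelConn F G where
  rel := fun {X Y} r a b =>
    ∀ (n : ℕ) (lam : PredLifting F n) (mu : PredLifting G n), Λ n lam mu →
      ∀ A : Fin n → Set X, a ∈ lam.app X A → b ∈ mu.app Y (fun i => rimage r (A i))

/-! A factorization `r = s · t` through `Y` maps into the couniversal one by
`y ↦ ({x | x t y}, {z | y s z})`, with `t ⊆ h° · coT r` and `s ⊆ coS r · h`. Monotonicity
and naturality of `K` and `L` move `K t` and `L s` along `h` to `K (coT r)` and `L (coS r)`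
with the middle point `G h b`, so the union defining `(L · K) r` is attained at the
couniversal factorization. -/

theorem SetFunctor.map_ofHom_id_apply (F : SetFunctor.{u}) {X : Type u} (a : F.obj X) :
    F.map (TypeCat.ofHom fun x : X => x) a = a :=
  F.map_id_apply X a

theorem rcomp_graph_id {X Y : Type u} (r : X → Y → Prop) :
    rcomp r (graph fun x : X => x) = r := by
  funext x y
  simp [rcomp, graph]

theorem rcomp_rconv_graph_id {X Y : Type u} (r : X → Y → Prop) :
    rcomp (rconv (graph fun y : Y => y)) r = r := by
  funext x y
  simp [rcomp, rconv, graph]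

theorem rcomp_coS_coT {X Z : Type u} (r : X → Z → Prop) : rcomp (coS r) (coT r) = r := by
  funext x z
  apply propext
  constructor
  · rintro ⟨p, hx, hz⟩
    exact p.2 x hx z hz
  · intro hxz
    exact ⟨⟨({x}, {z}), by rintro _ rfl _ rfl; exact hxz⟩, rfl, rfl⟩

def CoInt.lift {X Y Z : Type u} {r : X → Z → Prop} (t : X → Y → Prop) (s : Y → Z → Prop)
    (hst : ∀ x y z, t x y → s y z → r x z) : Y → CoInt r :=
  fun y => ⟨({x | t x y}, {z | s y z}), fun _ hx _ hz => hst _ y _ hx hz⟩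

namespace RelConn

variable {F G : SetFunctor.{u}} {L : RelConn F G}

theorem Natural.rel_rcomp_rconv_graph_iff (hL : L.Natural) {X Y Y' : Type u} (g : Y' → Y)
    (r : X → Y → Prop) (a : F.obj X) (b : G.obj Y') :
    L.rel (rcomp (rconv (graph g)) r) a b ↔ L.rel r a (G.map (TypeCat.ofHom g) b) := by
  have hnat := hL X X Y Y' (fun x => x) g r
  rw [rcomp_graph_id] at hnat
  simp [hnat, rcomp, rconv, graph, SetFunctor.map_ofHom_id_apply]

theorem Natural.rel_rcomp_graph_iff (hL : L.Natural) {X X' Y : Type u} (f : X' → X)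
    (r : X → Y → Prop) (a : F.obj X') (b : G.obj Y) :
    L.rel (rcomp r (graph f)) a b ↔ L.rel r (F.map (TypeCat.ofHom f) a) b := by
  have hnat := hL X X' Y Y f (fun y => y) r
  rw [rcomp_rconv_graph_id] at hnat
  simp [hnat, rcomp, rconv, graph, SetFunctor.map_ofHom_id_apply]

theorem IsConnector.rel_map_right_of_le (hL : L.IsConnector) {X Y Y' : Type u}
    {t : X → Y' → Prop} {t' : X → Y → Prop} (h : Y' → Y) (ht : ∀ x y, t x y → t' x (h y))
    {a : F.obj X} {b : G.obj Y'} (hab : L.rel t a b) :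
    L.rel t' a (G.map (TypeCat.ofHom h) b) := by
  have hle : ∀ x y, t x y → rcomp (rconv (graph h)) t' x y :=
    fun x y hxy => ⟨h y, ht x y hxy, rfl⟩
  exact (hL.2.rel_rcomp_rconv_graph_iff h t' a b).1 (hL.1 _ _ _ _ hle a b hab)

theorem IsConnector.rel_map_left_of_le (hL : L.IsConnector) {X X' Y : Type u}
    {s : X' → Y → Prop} {s' : X → Y → Prop} (h : X' → X) (hs : ∀ x y, s x y → s' (h x) y)
    {a : F.obj X'} {b : G.obj Y} (hab : L.rel s a b) :
    L.rel s' (F.map (TypeCat.ofHom h) a) b := by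
  have hle : ∀ x y, s x y → rcomp s' (graph h) x y :=
    fun x y hxy => ⟨h x, rfl, hs x y hxy⟩
  exact (hL.2.rel_rcomp_graph_iff h s' a b).1 (hL.1 _ _ _ _ hle a b hab)

end RelConn

/-- the composite of relational connectors is computed by the couniversal
factorization `r = s · t`: `(L · K) r = L s · K t`. -/
theorem comp_eq_couniversal (F G H : SetFunctor.{u})
    (K : RelConn F G) (L : RelConn G H)
    (hK : K.IsConnector) (hL : L.IsConnector)
    (X Z : Type u) (r : X → Z → Prop) :
    (L.comp K).rel r = rcomp (L.rel (coS r)) (K.rel (coT r)) := by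
  funext a c
  apply propext
  constructor
  · rintro ⟨Y, t, s, rfl, b, hKt, hLs⟩
    let h := CoInt.lift (r := rcomp s t) t s fun x y z hxy hyz => ⟨y, hxy, hyz⟩
    exact ⟨G.map (TypeCat.ofHom h) b,
      hK.rel_map_right_of_le h (fun _ _ hxy => hxy) hKt,
      hL.rel_map_left_of_le h (fun _ _ hyz => hyz) hLs⟩
  · rintro ⟨b, hKt, hLs⟩
    exact ⟨CoInt r, coT r, coS r, rcomp_coS_coT r, b, hKt, hLs⟩
end

section
/- For every Set functor F, the identity relational connector id_F is a relational connector F → F; that is, it satisfies monotonicity and naturality. -/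
open CategoryTheory

universe u

/-- `L`-similarity: `x ≼_L y` iff some `L`-simulation relates `x` to `y`. -/
def RelSimilar {F G : SetFunctor.{u}} (L : RelConn F G) {C D : Type u}
    (γ : C → F.obj C) (δ : D → G.obj D) : C → D → Prop :=
  fun x y => ∃ r, IsSim L γ δ r ∧ r x y

theorem rcomp_rconv_graph_rcomp_graph_iff {X X' Y Y' : Type u} (f : X' → X) (g : Y' → Y)
    (r : X → Y → Prop) (x : X') (y : Y') :
    rcomp (rconv (graph g)) (rcomp r (graph f)) x y ↔ r (f x) (g y) :=
  ⟨fun ⟨_, ⟨_, hf, hr⟩, hg⟩ => hf ▸ hg ▸ hr, fun hr => ⟨g y, ⟨f x, rfl, hr⟩, rfl⟩⟩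

namespace RelConn

variable {F G : SetFunctor.{u}}

theorem Natural.rel_rconv_graph_rcomp_iff {L : RelConn G F} (hL : L.Natural)
    {Z X X' : Type u} (h : X' → X) (s : Z → X → Prop) (a : G.obj Z) (b : F.obj X') :
    L.rel (rcomp (rconv (graph h)) s) a b ↔ L.rel s a (F.map (TypeCat.ofHom h) b) := by
  have key := congrFun (congrFun (hL Z Z X X' (fun z => z) h s) a) b
  rw [rcomp_graph_id, rcomp_rconv_graph_rcomp_graph_iff,
    show TypeCat.ofHom (fun z : Z => z) = 𝟙 Z from rfl, G.map_id] at key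
  exact key.to_iff

theorem id_mono (F : SetFunctor.{u}) : (RelConn.id F).Mono :=
  fun _ _ _ _ hr _ _ h G L hL Z s a hs =>
    hL.1 Z _ _ _ (fun _ _ ⟨x, hs, hxy⟩ => ⟨x, hs, hr _ _ hxy⟩) a _ (h G L hL Z s a hs)

theorem id_rel_map_of_rel_rcomp {X X' Y Y' : Type u} (f : X' → X) (g : Y' → Y)
    (r : X → Y → Prop) (b : F.obj X') (c : F.obj Y')
    (h : (RelConn.id F).rel (rcomp (rconv (graph g)) (rcomp r (graph f))) b c) :
    (RelConn.id F).rel r (F.map (TypeCat.ofHom f) b) (F.map (TypeCat.ofHom g) c) := by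
  intro G L hL Z s a hs
  rw [← hL.2.rel_rconv_graph_rcomp_iff] at hs ⊢
  refine hL.1 Z Y' _ _ ?_ a c (h G L hL Z _ a hs)
  rintro z y' ⟨x', ⟨x, hzx, rfl⟩, y, ⟨_, rfl, hxy⟩, hg⟩
  exact ⟨y, ⟨_, hzx, hxy⟩, hg⟩

theorem id_rel_rcomp_of_rel_map {X X' Y Y' : Type u} (f : X' → X) (g : Y' → Y)
    (r : X → Y → Prop) (b : F.obj X') (c : F.obj Y')
    (h : (RelConn.id F).rel r (F.map (TypeCat.ofHom f) b) (F.map (TypeCat.ofHom g) c)) :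
    (RelConn.id F).rel (rcomp (rconv (graph g)) (rcomp r (graph f))) b c := by
  intro G L hL Z s a hs
  have hfs : L.rel (rcomp (graph f) s) a (F.map (TypeCat.ofHom f) b) := by
    rw [← hL.2.rel_rconv_graph_rcomp_iff]
    exact hL.1 Z X' _ _ (fun z x' hs => ⟨f x', ⟨x', hs, rfl⟩, rfl⟩) a b hs
  have hrfs := h G L hL Z _ a hfs
  rw [← hL.2.rel_rconv_graph_rcomp_iff] at hrfs
  refine hL.1 Z Y' _ _ ?_ a c hrfs
  rintro z y' ⟨y, ⟨x, ⟨x', hzx', hf⟩, hxy⟩, hg⟩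
  exact ⟨x', hzx', y, ⟨x, hf, hxy⟩, hg⟩

theorem id_natural (F : SetFunctor.{u}) : (RelConn.id F).Natural := by
  intro X X' Y Y' f g r
  funext b c
  rw [rcomp_rconv_graph_rcomp_graph_iff]
  exact propext ⟨id_rel_map_of_rel_rcomp f g r b c, id_rel_rcomp_of_rel_map f g r b c⟩

end RelConn

/-- the identity relational connector `id_F` is a relational connector,
i.e. it is monotone and natural. -/
theorem id_isConnector (F : SetFunctor.{u}) : (RelConn.id F).IsConnector :=
  ⟨RelConn.id_mono F, RelConn.id_natural F⟩
end

section
/- The lax extensions of a Set functor F are precisely the relational connectors L : F → F that are transitive and extend F; that is, a relational connector L : F → F satisfies (L2) Ls · Lr ⊆ L(s · r) for all composable relations r, s, and (L3) Ff ⊆ Lf and (Ff)° ⊆ L(f°) for all functions f, if and only if L · L ≤ L and Δ_{FX} ⊆ LΔ_X for all sets X. -/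
open CategoryTheory

universe u

/-- `L`-similarity: `x ≼_L y` iff some `L`-simulation relates `x` to `y`. -/
def Similar' {F G : SetFunctor.{u}} (L : RelConn F G) {C D : Type u}
    (γ : C → F.obj C) (δ : D → G.obj D) : C → D → Prop :=
  fun x y => ∃ r, IsSim L γ δ r ∧ r x y

/-! Transitivity is (L2) read through the definition of the composite `L · L`. For (L3),
naturality with one leg the identity computes `L f = L Δ · F f` and `L (f°) = (F f)° · L Δ`,
so `F f ⊆ L f` and `(F f)° ⊆ L (f°)` amount to `Δ ⊆ L Δ`, which is the case `f = id`. -/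

namespace RelConn

variable {F G : SetFunctor.{u}}

@[simp]
theorem map_ofHom_id_apply {X : Type u} (a : F.obj X) :
    F.map (TypeCat.ofHom (_root_.id : X → X)) a = a :=
  F.map_id_apply X a

theorem transitive_iff_laxL2 (L : RelConn F F) : L.Transitive ↔ L.LaxL2 := by
  constructor
  · rintro htr X Y Z r s a c ⟨b, hr, hs⟩
    exact htr X Z (rcomp s r) a c ⟨Y, r, s, rfl, b, hr, hs⟩
  · rintro hL2 X Z _ a c ⟨Y, t, s, rfl, b, ht, hs⟩
    exact hL2 X Y Z t s a c ⟨b, ht, hs⟩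

theorem LaxL3.extendsF {L : RelConn F F} (hL3 : L.LaxL3) : L.ExtendsF :=
  fun X a b hab => (hL3 X X _root_.id).1 a b (by simpa [graph, diag] using hab)

theorem rcomp_rconv_graph_map_id {X Z : Type u} (r : X → G.obj Z → Prop) :
    rcomp (rconv (graph (G.map (TypeCat.ofHom (_root_.id : Z → Z))))) r = r := by
  funext x c
  simp [rcomp, rconv, graph]

theorem rcomp_graph_map_id {X Z : Type u} (r : F.obj X → Z → Prop) :
    rcomp r (graph (F.map (TypeCat.ofHom (_root_.id : X → X)))) = r := by
  funext a z
  simp [rcomp, graph]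

theorem Natural.rel_graph {L : RelConn F G} (hL : L.Natural) {X Y : Type u} (f : X → Y) :
    L.rel (graph f) = rcomp (L.rel (diag Y)) (graph (F.map (TypeCat.ofHom f))) := by
  have h := hL Y X Y Y f _root_.id (diag Y)
  rw [rcomp_rconv_graph_map_id] at h
  rw [← h]
  congr 1
  funext x y
  simp [rcomp, rconv, graph, diag, eq_comm]

theorem Natural.rel_rconv_graph {L : RelConn F G} (hL : L.Natural) {X Y : Type u}
    (f : X → Y) :
    L.rel (rconv (graph f)) =
      rcomp (rconv (graph (G.map (TypeCat.ofHom f)))) (L.rel (diag Y)) := by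
  have h := hL Y Y Y X _root_.id f (diag Y)
  rw [rcomp_graph_map_id] at h
  rw [← h]
  congr 1
  funext y x
  simp [rcomp, rconv, graph, diag, eq_comm]

theorem Natural.laxL3 {L : RelConn F F} (hL : L.Natural) (hext : L.ExtendsF) : L.LaxL3 := by
  intro X Y f
  constructor
  · intro a b hab
    rw [hL.rel_graph]
    exact ⟨b, hab, hext Y b b rfl⟩
  · intro b a hab
    rw [hL.rel_rconv_graph]
    exact ⟨b, hext Y b b rfl, hab⟩

end RelConn

/-- the lax extensions of `F` are precisely the transitive relational
connectors `F → F` that extend `F`: a relational connector `L : F → F` satisfies (L2)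
and (L3) iff `L · L ≤ L` and `Δ_{FX} ⊆ L Δ_X` for all sets `X`. -/
theorem laxExtension_iff_transitive_extends (F : SetFunctor.{u})
    (L : RelConn F F) (hL : L.IsConnector) :
    (L.LaxL2 ∧ L.LaxL3) ↔ (L.Transitive ∧ L.ExtendsF) := by
  rw [L.transitive_iff_laxL2]
  exact and_congr_right fun _ => ⟨RelConn.LaxL3.extendsF, hL.2.laxL3⟩
end
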